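/- Let s > 11/2 and suppose (ξ_k)_{k≥1} satisfies Σ_{k≥1} ‖ξ_k‖_{H^σ} < ∞ for every σ ≥ 0. For ε ∈ (0,1) and X = (u,η) ∈ H^s(𝕋) × H^{s-1}(𝕋), set h_ε^k(X) = (−J_ε (1−∂²_x)^{-1} 𝓛_{ξ_k} (1−∂²_x) J_ε u, −J_ε 𝓛_{ξ_k} J_ε η). Then there is a constant C > 0, independent of ε, such that for all X: Σ_{k=1}^∞ |(h_ε^k(X), X)_{H^s×H^{s-1}}|² ≤ C (‖u‖²_{H^s} + ‖η‖²_{H^{s-1}})². -/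

import Mathlib

noncomputable section
open scoped BigOperators

/-- A (complex-valued) function on the torus `𝕋 = ℝ/2πℤ`, represented by its sequence of
Fourier coefficients `f̂ : ℤ → ℂ`. -/
abbrev FC := ℤ → ℂ

namespace FC

/-- The Sobolev weight `(1+k²)^s`. -/
def wt (s : ℝ) (k : ℤ) : ℝ := (1 + (k : ℝ) ^ 2) ^ s

/-- `c` represents a function belonging to the Sobolev space `H^s(𝕋)`. -/
def memHs (s : ℝ) (c : FC) : Prop := Summable fun k : ℤ => wt s k * ‖c k‖ ^ 2

/-- The `H^s(𝕋)` norm: `‖f‖²_{H^s} = Σ_{k∈ℤ} (1+k²)^s |f̂(k)|²`. -/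
def hsNorm (s : ℝ) (c : FC) : ℝ := Real.sqrt (∑' k : ℤ, wt s k * ‖c k‖ ^ 2)

/-- The `H^s(𝕋)` inner product `(f,g)_{H^s} = Σ_{k∈ℤ} (1+k²)^s f̂(k) conj(ĝ(k))`
(its real part; the sum is real for real-valued functions). -/
def hsInner (s : ℝ) (c d : FC) : ℝ :=
  (∑' k : ℤ, ((wt s k : ℂ) * (c k * (starRingEnd ℂ) (d k)))).re

/-- `c` represents a real-valued function (conjugate-symmetric coefficients). -/
def isReal (c : FC) : Prop := ∀ k : ℤ, c (-k) = (starRingEnd ℂ) (c k)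

/-- The derivative `∂ₓ`, i.e. the Fourier multiplier `ik`. -/
def D1 (c : FC) : FC := fun k => Complex.I * (k : ℂ) * c k

/-- The pointwise product of functions, i.e. convolution of Fourier coefficients. -/
def mul (c d : FC) : FC := fun k => ∑' j : ℤ, c j * d (k - j)

/-- The represented function, evaluated at `x ∈ ℝ`. -/
def eval (c : FC) (x : ℝ) : ℂ := ∑' k : ℤ, c k * Complex.exp (Complex.I * (k : ℂ) * (x : ℂ))

/-- The `L^∞` norm (supremum of the represented periodic function over ℝ). -/
def linfty (c : FC) : ℝ := ⨆ x : ℝ, ‖eval c x‖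

/-- The `W^{1,∞}` norm. -/
def w1infty (c : FC) : ℝ := linfty c + linfty (D1 c)

/-- A Fourier multiplier operator with real symbol `m`. -/
def mult (m : ℤ → ℝ) (c : FC) : FC := fun k => (m k : ℂ) * c k

/-- The operator `(1-∂ₓ²)⁻¹`, i.e. the Fourier multiplier `(1+k²)⁻¹`. -/
def helmInv : FC → FC := mult fun k => (1 + (k : ℝ) ^ 2)⁻¹

/-- The operator `1-∂ₓ²`, i.e. the Fourier multiplier `1+k²`. -/
def helm : FC → FC := mult fun k => 1 + (k : ℝ) ^ 2

/-- The operator `T̃_ε = (1-ε²∂ₓ²)⁻¹`, i.e. the Fourier multiplier `(1+ε²k²)⁻¹`. -/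
def T (ε : ℝ) : FC → FC := mult fun k => (1 + ε ^ 2 * (k : ℝ) ^ 2)⁻¹

/-- The periodic Hilbert transform, i.e. the Fourier multiplier `-i·sgn(k)`. -/
def hilbert (c : FC) : FC := fun k => -Complex.I * (Int.sign k : ℂ) * c k

/-- The Friedrichs-type mollifier `J_ε`, the Fourier multiplier `ĵ(εk)`. -/
def Jmol (jhat : ℝ → ℝ) (ε : ℝ) : FC → FC := mult fun k => jhat (ε * (k : ℝ))

/-- The generalized Lie derivative `𝓛_ξ f = ξ ∂ₓ f + (∂ₓ ξ) f`. -/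
def lie (ξ c : FC) : FC := mul ξ (D1 c) + mul (D1 ξ) c

/-- `𝓛²_ξ f = 𝓛_ξ (𝓛_ξ f)`. -/
def lie2 (ξ c : FC) : FC := lie ξ (lie ξ c)

/-- The coefficientwise sum `Σ_{k∈ℕ} F k` of a sequence of functions. -/
def tsumFC (F : ℕ → FC) : FC := fun m => ∑' k : ℕ, F k m

/-- The norm on the product space `H^{s₁}×H^{s₂}`. -/
def pairNorm (s₁ s₂ : ℝ) (c d : FC) : ℝ := Real.sqrt (hsNorm s₁ c ^ 2 + hsNorm s₂ d ^ 2)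

/-- The inner product on the product space `H^{s₁}×H^{s₂}`:
`((c₁,d₁),(c₂,d₂)) ↦ (c₁,c₂)_{H^{s₁}} + (d₁,d₂)_{H^{s₂}}`. -/
def pairInner (s₁ s₂ : ℝ) (c₁ d₁ c₂ d₂ : FC) : ℝ := hsInner s₁ c₁ c₂ + hsInner s₂ d₁ d₂

end FC

/-- First component of the mollified diffusion coefficient `h_ε^k`:
`−J_ε (1−∂ₓ²)⁻¹ 𝓛_{ξ_k} (1−∂ₓ²) J_ε u`. -/
def hMol1 (jh : ℝ → ℝ) (ε : ℝ) (ξ : ℕ → FC) (k : ℕ) (u : FC) : FC :=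
  -(FC.Jmol jh ε (FC.helmInv (FC.lie (ξ k) (FC.helm (FC.Jmol jh ε u)))))

/-- Second component of the mollified diffusion coefficient `h_ε^k`:
`−J_ε 𝓛_{ξ_k} J_ε η`. -/
def hMol2 (jh : ℝ → ℝ) (ε : ℝ) (ξ : ℕ → FC) (k : ℕ) (η : FC) : FC :=
  -(FC.Jmol jh ε (FC.lie (ξ k) (FC.Jmol jh ε η)))

/-!
Moving `J_ε` and `(1 - ∂ₓ²)^{±1}` across the inner products turns `(h_ε^k(X), X)` into
`-(𝓛_{ξ_k} g₁, g₁)_{H^{s-2}} - (𝓛_{ξ_k} g₂, g₂)_{H^{s-1}}` with `g₁ = (1 - ∂ₓ²) J_ε u` and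
`g₂ = J_ε η`, whose norms are bounded by those of `u` and `η` uniformly in `ε`.

For real `ξ`, `(𝓛_ξ g, g)_{H^σ}` is the real part of a double sum over the output and input
frequencies `(k, m)` carrying the weight `k (1 + k²)^σ`. Symmetrizing under `k ↔ m` replaces this
weight by `φ(k) - φ(m)` with `φ(x) = x (1 + x²)^σ`, which the mean value theorem and Peetre's
inequality bound by `(1 + (k - m)²)^{σ + 1/2} (1 + k²)^{σ/2} (1 + m²)^{σ/2}`. No derivative falls
on `g`, and Young's inequality gives `|(𝓛_ξ g, g)_{H^σ}| ≲ ‖ξ‖_{H^{2σ+2}} ‖g‖²_{H^σ}`. The extra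
smoothness of the mollified `g` only makes the unsymmetrized double sum absolutely convergent.
Squaring and summing over `k` uses `Σ_k ‖ξ_k‖_{H^{2s}} < ∞`.
-/

namespace FC

open Complex

def weight (t x : ℝ) : ℝ := (1 + x ^ 2) ^ t

lemma wt_eq_weight (t : ℝ) (k : ℤ) : wt t k = weight t k := rfl

lemma weight_pos (t x : ℝ) : 0 < weight t x := by unfold weight; positivity

lemma weight_nonneg (t x : ℝ) : 0 ≤ weight t x := (weight_pos t x).le

lemma weight_add (s t x : ℝ) : weight (s + t) x = weight s x * weight t x :=
  Real.rpow_add (by positivity) s t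

lemma weight_half_mul_self (t x : ℝ) : weight (t / 2) x * weight (t / 2) x = weight t x := by
  rw [← weight_add, add_halves]

lemma weight_le_weight {s t : ℝ} (hst : s ≤ t) (x : ℝ) : weight s x ≤ weight t x :=
  Real.rpow_le_rpow_of_exponent_le (by nlinarith [sq_nonneg x]) hst

lemma one_le_weight {t : ℝ} (ht : 0 ≤ t) (x : ℝ) : 1 ≤ weight t x :=
  Real.one_le_rpow (by nlinarith [sq_nonneg x]) ht

lemma weight_le_weight_of_sq_le {t x y : ℝ} (ht : 0 ≤ t) (h : x ^ 2 ≤ y ^ 2) :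
    weight t x ≤ weight t y :=
  Real.rpow_le_rpow (by positivity) (by linarith) ht

lemma abs_le_weight_half (x : ℝ) : |x| ≤ weight (1 / 2) x := by
  rw [weight, ← Real.sqrt_eq_rpow, ← Real.sqrt_sq_eq_abs]
  exact Real.sqrt_le_sqrt (by linarith)

/-- Peetre's inequality. -/
lemma weight_add_le {t : ℝ} (ht : 0 ≤ t) (x y : ℝ) :
    weight t (x + y) ≤ 2 ^ t * weight t x * weight t y := by
  rw [weight, weight, weight, ← Real.mul_rpow (by norm_num) (by positivity),
    ← Real.mul_rpow (by positivity) (by positivity)]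
  exact Real.rpow_le_rpow (by positivity)
    (by nlinarith [sq_nonneg (x - y), sq_nonneg (x * y)]) ht

/-- The symbol `x (1 + x²)^σ` of `(1 - ∂ₓ²)^σ ∂ₓ / i`. -/
def weightedId (σ x : ℝ) : ℝ := x * weight σ x

lemma hasDerivAt_weightedId (σ x : ℝ) :
    HasDerivAt (weightedId σ) (weight σ x + 2 * σ * (x ^ 2 * weight (σ - 1) x)) x := by
  have hw : HasDerivAt (weight σ) (2 * x * σ * weight (σ - 1) x) x := by
    unfold weight
    simpa using ((hasDerivAt_pow 2 x).const_add 1).rpow_const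
      (p := σ) (Or.inl (by positivity))
  exact ((hasDerivAt_id' x).mul hw).congr_deriv (by ring)

lemma abs_deriv_weightedId_le {σ : ℝ} (hσ : 0 ≤ σ) (x : ℝ) :
    |weight σ x + 2 * σ * (x ^ 2 * weight (σ - 1) x)| ≤ (2 * σ + 1) * weight σ x := by
  have hx : x ^ 2 * weight (σ - 1) x ≤ weight σ x := by
    calc x ^ 2 * weight (σ - 1) x ≤ weight 1 x * weight (σ - 1) x := by
          gcongr
          · exact weight_nonneg _ _
          · rw [weight, Real.rpow_one]; linarith
      _ = weight σ x := by rw [← weight_add]; ring_nf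
  have h0 : 0 ≤ x ^ 2 * weight (σ - 1) x := mul_nonneg (sq_nonneg x) (weight_nonneg _ _)
  have hw := weight_nonneg σ x
  rw [abs_of_nonneg (by positivity)]
  nlinarith

lemma weight_le_of_mem_uIcc {σ a b c : ℝ} (hσ : 0 ≤ σ) (hc : c ∈ Set.uIcc a b) :
    weight σ c ≤ 2 ^ σ * weight σ (b - a) * (weight (σ / 2) a * weight (σ / 2) b) := by
  have hσ2 : 0 ≤ σ / 2 := by positivity
  have near : ∀ d, (c - d) ^ 2 ≤ (b - a) ^ 2 → weight (σ / 2) c ≤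
      2 ^ (σ / 2) * weight (σ / 2) d * weight (σ / 2) (b - a) := by
    intro d hd
    calc weight (σ / 2) c = weight (σ / 2) (d + (c - d)) := by ring_nf
      _ ≤ 2 ^ (σ / 2) * weight (σ / 2) d * weight (σ / 2) (c - d) := weight_add_le hσ2 _ _
      _ ≤ _ := mul_le_mul_of_nonneg_left (weight_le_weight_of_sq_le hσ2 hd)
          (mul_nonneg (by positivity) (weight_nonneg _ _))
  have hca : (c - a) ^ 2 ≤ (b - a) ^ 2 := by
    rcases Set.mem_uIcc.mp hc with ⟨h1, h2⟩ | ⟨h1, h2⟩ <;> nlinarith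
  have hcb : (c - b) ^ 2 ≤ (b - a) ^ 2 := by
    rcases Set.mem_uIcc.mp hc with ⟨h1, h2⟩ | ⟨h1, h2⟩ <;> nlinarith
  calc weight σ c = weight (σ / 2) c * weight (σ / 2) c := (weight_half_mul_self σ c).symm
    _ ≤ (2 ^ (σ / 2) * weight (σ / 2) a * weight (σ / 2) (b - a)) *
        (2 ^ (σ / 2) * weight (σ / 2) b * weight (σ / 2) (b - a)) :=
      mul_le_mul (near a hca) (near b hcb) (weight_nonneg _ _)
        (mul_nonneg (mul_nonneg (by positivity) (weight_nonneg _ _)) (weight_nonneg _ _))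
    _ = _ := by
      have h2 : (2 : ℝ) ^ (σ / 2) * 2 ^ (σ / 2) = 2 ^ σ := by
        rw [← Real.rpow_add (by norm_num), add_halves]
      rw [← weight_half_mul_self σ (b - a), ← h2]
      ring

lemma abs_weightedId_sub_le {σ : ℝ} (hσ : 0 ≤ σ) (a b : ℝ) :
    |weightedId σ b - weightedId σ a| ≤
      (2 * σ + 1) * 2 ^ σ * weight (σ + 1 / 2) (b - a) * (weight (σ / 2) a * weight (σ / 2) b) := by
  have hmvt := Convex.norm_image_sub_le_of_norm_hasDerivWithin_le
    (fun x _ => (hasDerivAt_weightedId σ x).hasDerivWithinAt)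
    (fun x hx => (abs_deriv_weightedId_le hσ x).trans
      (mul_le_mul_of_nonneg_left (weight_le_of_mem_uIcc hσ hx) (by linarith)))
    (convex_uIcc a b) Set.left_mem_uIcc Set.right_mem_uIcc
  simp only [Real.norm_eq_abs] at hmvt
  set P := weight (σ / 2) a * weight (σ / 2) b
  have hP : 0 ≤ P := mul_nonneg (weight_nonneg _ _) (weight_nonneg _ _)
  have hC : 0 ≤ (2 * σ + 1) * 2 ^ σ * weight σ (b - a) * P :=
    mul_nonneg (mul_nonneg (by positivity) (weight_nonneg _ _)) hP
  calc |weightedId σ b - weightedId σ a|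
      ≤ (2 * σ + 1) * 2 ^ σ * weight σ (b - a) * P * |b - a| := by linarith
    _ ≤ (2 * σ + 1) * 2 ^ σ * weight σ (b - a) * P * weight (1 / 2) (b - a) :=
      mul_le_mul_of_nonneg_left (abs_le_weight_half _) hC
    _ = _ := by rw [weight_add]; ring

lemma hsNorm_nonneg (t : ℝ) (c : FC) : 0 ≤ hsNorm t c := Real.sqrt_nonneg _

lemma hsNorm_sq (t : ℝ) (c : FC) : hsNorm t c ^ 2 = ∑' k, wt t k * ‖c k‖ ^ 2 :=
  Real.sq_sqrt (tsum_nonneg fun _ => mul_nonneg (weight_nonneg _ _) (sq_nonneg _))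

lemma wt_mul_norm_sq_le_hsNorm_sq {t : ℝ} {c : FC} (hc : memHs t c) (k : ℤ) :
    wt t k * ‖c k‖ ^ 2 ≤ hsNorm t c ^ 2 := by
  rw [hsNorm_sq]
  exact hc.le_tsum k fun j _ => mul_nonneg (weight_nonneg _ _) (sq_nonneg _)

section mult

variable {t r C : ℝ} {m : ℤ → ℝ} {c : FC}

lemma wt_mul_norm_mult_sq_le (hm : ∀ k, wt r k * m k ^ 2 ≤ C) (k : ℤ) :
    wt (t + r) k * ‖mult m c k‖ ^ 2 ≤ C * (wt t k * ‖c k‖ ^ 2) := by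
  have hnorm : ‖mult m c k‖ ^ 2 = m k ^ 2 * ‖c k‖ ^ 2 := by
    rw [mult, norm_mul, Complex.norm_real, Real.norm_eq_abs, mul_pow, sq_abs]
  rw [hnorm, wt_eq_weight, weight_add, ← wt_eq_weight, ← wt_eq_weight]
  calc wt t k * wt r k * (m k ^ 2 * ‖c k‖ ^ 2)
      = (wt r k * m k ^ 2) * (wt t k * ‖c k‖ ^ 2) := by ring
    _ ≤ C * (wt t k * ‖c k‖ ^ 2) :=
      mul_le_mul_of_nonneg_right (hm k) (mul_nonneg (weight_nonneg _ _) (sq_nonneg _))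

lemma memHs_mult (hc : memHs t c) (hm : ∀ k, wt r k * m k ^ 2 ≤ C) :
    memHs (t + r) (mult m c) :=
  .of_nonneg_of_le (fun _ => mul_nonneg (weight_nonneg _ _) (sq_nonneg _))
    (wt_mul_norm_mult_sq_le hm) (hc.mul_left C)

lemma hsNorm_mult_sq_le (hc : memHs t c) (hm : ∀ k, wt r k * m k ^ 2 ≤ C) :
    hsNorm (t + r) (mult m c) ^ 2 ≤ C * hsNorm t c ^ 2 := by
  rw [hsNorm_sq, hsNorm_sq, ← tsum_mul_left]
  exact (memHs_mult hc hm).tsum_le_tsum (wt_mul_norm_mult_sq_le hm) (hc.mul_left C)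

end mult

lemma wt_neg_two_mul_one_add_sq_sq_le_one (k : ℤ) :
    wt (-2) k * (1 + (k : ℝ) ^ 2) ^ 2 ≤ 1 := by
  rw [wt, Real.rpow_neg (by positivity), Real.rpow_two, inv_mul_cancel₀ (by positivity)]

lemma wt_zero_mul_sq_le_one {jh : ℝ → ℝ} (hj0 : ∀ x, 0 ≤ jh x) (hj1 : ∀ x, jh x ≤ 1)
    (ε : ℝ) (k : ℤ) : wt 0 k * jh (ε * k) ^ 2 ≤ 1 := by
  rw [wt, Real.rpow_zero, one_mul]
  exact pow_le_one₀ (hj0 _) (hj1 _)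

lemma wt_one_mul_sq_le_div_sq {jh : ℝ → ℝ} {C : ℝ} (hj0 : ∀ x, 0 ≤ jh x) (hj1 : ∀ x, jh x ≤ 1)
    (hC : ∀ x, (1 + x ^ 2) * jh x ≤ C) {ε : ℝ} (hε : 0 < ε) (hε1 : ε ≤ 1) (k : ℤ) :
    wt 1 k * jh (ε * k) ^ 2 ≤ C / ε ^ 2 := by
  rw [wt, Real.rpow_one, le_div_iff₀ (by positivity)]
  have hj := hj0 (ε * k)
  calc (1 + (k : ℝ) ^ 2) * jh (ε * k) ^ 2 * ε ^ 2
      ≤ (1 + (ε * k) ^ 2) * jh (ε * k) * jh (ε * k) := by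
        rw [sq (jh _)]
        have : ε ^ 2 * (1 + (k : ℝ) ^ 2) ≤ 1 + (ε * k) ^ 2 := by nlinarith [sq_nonneg (k : ℝ)]
        nlinarith [mul_nonneg hj hj]
    _ ≤ C * 1 := mul_le_mul (hC _) (hj1 _) hj ((mul_nonneg (by positivity) hj).trans (hC _))
    _ = C := mul_one C

lemma hsInner_neg_left (t : ℝ) (c d : FC) : hsInner t (-c) d = -hsInner t c d := by
  simp only [hsInner, Pi.neg_apply, neg_mul, mul_neg, tsum_neg, Complex.neg_re]

lemma hsInner_mult_left (t : ℝ) (m : ℤ → ℝ) (c d : FC) :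
    hsInner t (mult m c) d = hsInner t c (mult m d) := by
  simp only [hsInner, mult, map_mul, Complex.conj_ofReal]
  congr 1
  exact tsum_congr fun _ => by ring

lemma hsInner_helmInv_left (t : ℝ) (c d : FC) : hsInner t (helmInv c) d = hsInner (t - 1) c d := by
  simp only [hsInner, helmInv, mult, wt]
  congr 1
  refine tsum_congr fun k => ?_
  rw [Real.rpow_sub_one (by positivity), div_eq_mul_inv]
  push_cast
  ring

lemma hsInner_helm_right (t : ℝ) (c d : FC) : hsInner t c (helm d) = hsInner (t + 1) c d := by
  simp only [hsInner, helm, mult, map_mul, Complex.conj_ofReal, wt]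
  congr 1
  refine tsum_congr fun k => ?_
  rw [Real.rpow_add_one (by positivity)]
  push_cast
  ring

section mollifier

variable {jh : ℝ → ℝ} {t ε : ℝ} {c : FC}

lemma memHs_Jmol (hc : memHs t c) (hj0 : ∀ x, 0 ≤ jh x) (hj1 : ∀ x, jh x ≤ 1) :
    memHs t (Jmol jh ε c) := by
  have h := memHs_mult hc (wt_zero_mul_sq_le_one hj0 hj1 ε)
  rwa [add_zero] at h

lemma hsNorm_Jmol_sq_le (hc : memHs t c) (hj0 : ∀ x, 0 ≤ jh x) (hj1 : ∀ x, jh x ≤ 1) :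
    hsNorm t (Jmol jh ε c) ^ 2 ≤ hsNorm t c ^ 2 := by
  have h := hsNorm_mult_sq_le hc (wt_zero_mul_sq_le_one hj0 hj1 ε)
  rwa [add_zero, one_mul] at h

lemma memHs_Jmol_add_one {C : ℝ} (hc : memHs t c) (hj0 : ∀ x, 0 ≤ jh x) (hj1 : ∀ x, jh x ≤ 1)
    (hC : ∀ x, (1 + x ^ 2) * jh x ≤ C) (hε : 0 < ε) (hε1 : ε ≤ 1) :
    memHs (t + 1) (Jmol jh ε c) :=
  memHs_mult hc (wt_one_mul_sq_le_div_sq hj0 hj1 hC hε hε1)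

lemma memHs_helm (hc : memHs t c) : memHs (t - 2) (helm c) := by
  have h := memHs_mult hc wt_neg_two_mul_one_add_sq_sq_le_one
  rwa [← sub_eq_add_neg] at h

lemma hsNorm_helm_sq_le (hc : memHs t c) : hsNorm (t - 2) (helm c) ^ 2 ≤ hsNorm t c ^ 2 := by
  have h := hsNorm_mult_sq_le hc wt_neg_two_mul_one_add_sq_sq_le_one
  rwa [← sub_eq_add_neg, one_mul] at h

end mollifier

lemma summable_wt_neg_one : Summable fun k : ℤ => wt (-1) k := by
  refine Summable.of_norm_bounded_eventually
    ((Real.summable_one_div_int_pow (p := 2)).mpr one_lt_two) ?_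
  filter_upwards [(Set.finite_singleton (0 : ℤ)).compl_mem_cofinite] with k hk
  have hk : (1 : ℝ) ≤ (k : ℝ) ^ 2 := by
    have : (1 : ℝ) ≤ |(k : ℝ)| := by exact_mod_cast Int.one_le_abs hk
    nlinarith [sq_abs (k : ℝ)]
  rw [wt_eq_weight, Real.norm_of_nonneg (weight_nonneg _ _), weight, Real.rpow_neg_one, one_div]
  exact inv_anti₀ (by linarith) (by linarith)

lemma summable_and_tsum_wt_mul_norm_le {t r : ℝ} (hr : 2 * t + 1 ≤ r) {c : FC}
    (hc : memHs r c) :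
    Summable (fun k => wt t k * ‖c k‖) ∧
      ∑' k, wt t k * ‖c k‖ ≤ √(∑' k : ℤ, wt (-1) k) * hsNorm r c := by
  have hsplit : ∀ k, wt t k * ‖c k‖ = wt (-1 / 2) k * (wt (t + 1 / 2) k * ‖c k‖) := fun k => by
    rw [← mul_assoc, wt_eq_weight, wt_eq_weight, wt_eq_weight, ← weight_add]; ring_nf
  have hf2 : ∀ k, wt (-1 / 2) k ^ (2 : ℝ) = wt (-1) k := fun k => by
    rw [Real.rpow_two, sq, wt_eq_weight, wt_eq_weight, weight_half_mul_self]
  have hg2 : ∀ k, (wt (t + 1 / 2) k * ‖c k‖) ^ (2 : ℝ) ≤ wt r k * ‖c k‖ ^ 2 := fun k => by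
    rw [Real.rpow_two, mul_pow, sq (wt _ k), wt_eq_weight, wt_eq_weight, ← weight_add]
    exact mul_le_mul_of_nonneg_right (weight_le_weight (by linarith) _) (sq_nonneg _)
  have hg : Summable fun k => (wt (t + 1 / 2) k * ‖c k‖) ^ (2 : ℝ) :=
    .of_nonneg_of_le (fun k => by positivity [weight_nonneg (t + 1 / 2) k]) hg2 hc
  obtain ⟨hs, hle⟩ := Real.summable_and_inner_le_Lp_mul_Lq_tsum_of_nonneg
    (f := fun k => wt (-1 / 2) k) (g := fun k => wt (t + 1 / 2) k * ‖c k‖)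
    Real.HolderConjugate.two_two (fun k => weight_nonneg _ _)
    (fun k => mul_nonneg (weight_nonneg _ _) (norm_nonneg _))
    (summable_wt_neg_one.congr fun k => (hf2 k).symm) hg
  refine ⟨hs.congr fun k => (hsplit k).symm, ?_⟩
  rw [tsum_congr hsplit]
  refine hle.trans ?_
  rw [tsum_congr hf2, ← Real.sqrt_eq_rpow, ← Real.sqrt_eq_rpow]
  exact mul_le_mul_of_nonneg_left (Real.sqrt_le_sqrt (hg.tsum_le_tsum hg2 hc)) (Real.sqrt_nonneg _)

lemma hasSum_mul_sub_left {a b : ℤ → ℝ} (ha0 : ∀ k, 0 ≤ a k) (hb0 : ∀ k, 0 ≤ b k)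
    (ha : Summable a) (hb : Summable b) :
    HasSum (fun p : ℤ × ℤ => a (p.1 - p.2) * b p.2) ((∑' k, a k) * ∑' k, b k) := by
  let e : ℤ × ℤ ≃ ℤ × ℤ :=
    ⟨fun p => (p.1 + p.2, p.2), fun p => (p.1 - p.2, p.2), fun p => by simp, fun p => by simp⟩
  rw [← e.hasSum_iff]
  exact (ha.hasSum.mul hb.hasSum (ha.mul_of_nonneg hb ha0 hb0)).congr_fun fun p => by simp [e]

lemma hasSum_mul_sub_right {a b : ℤ → ℝ} (ha0 : ∀ k, 0 ≤ a k) (hb0 : ∀ k, 0 ≤ b k)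
    (ha : Summable a) (hb : Summable b) :
    HasSum (fun p : ℤ × ℤ => a (p.1 - p.2) * b p.1) ((∑' k, a k) * ∑' k, b k) := by
  let e : ℤ × ℤ ≃ ℤ × ℤ :=
    ⟨fun p => (p.2, p.2 - p.1), fun p => (p.1 - p.2, p.1), fun p => by simp, fun p => by simp⟩
  rw [← e.hasSum_iff]
  exact (ha.hasSum.mul hb.hasSum (ha.mul_of_nonneg hb ha0 hb0)).congr_fun fun p => by simp [e]

/-- Young's inequality `ℓ¹ * ℓ² ⊆ ℓ²`, tested against `ℓ²`. -/
lemma summable_and_tsum_mul_sub_le {a x y : ℤ → ℝ} (ha0 : ∀ k, 0 ≤ a k) (ha : Summable a)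
    (hx : Summable fun k => x k ^ 2) (hy : Summable fun k => y k ^ 2) :
    Summable (fun p : ℤ × ℤ => a (p.1 - p.2) * (x p.2 * y p.1)) ∧
      ∑' p : ℤ × ℤ, a (p.1 - p.2) * (x p.2 * y p.1) ≤
        (∑' k, a k) * ((∑' k, x k ^ 2 + ∑' k, y k ^ 2) / 2) := by
  have hsum := ((hasSum_mul_sub_left ha0 (fun k => sq_nonneg (x k)) ha hx).add
    (hasSum_mul_sub_right ha0 (fun k => sq_nonneg (y k)) ha hy)).div_const 2
  have hle : ∀ p : ℤ × ℤ, ‖a (p.1 - p.2) * (x p.2 * y p.1)‖ ≤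
      (a (p.1 - p.2) * x p.2 ^ 2 + a (p.1 - p.2) * y p.1 ^ 2) / 2 := fun p => by
    rw [norm_mul, Real.norm_of_nonneg (ha0 _), Real.norm_eq_abs, abs_mul]
    nlinarith [ha0 (p.1 - p.2), sq_nonneg (|x p.2| - |y p.1|), sq_abs (x p.2), sq_abs (y p.1)]
  have hs : Summable (fun p : ℤ × ℤ => a (p.1 - p.2) * (x p.2 * y p.1)) :=
    .of_norm_bounded hsum.summable hle
  refine ⟨hs, ?_⟩
  calc ∑' p : ℤ × ℤ, a (p.1 - p.2) * (x p.2 * y p.1)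
      ≤ ∑' p : ℤ × ℤ, (a (p.1 - p.2) * x p.2 ^ 2 + a (p.1 - p.2) * y p.1 ^ 2) / 2 :=
        hs.tsum_le_tsum (fun p => (le_abs_self _).trans (hle p)) hsum.summable
    _ = _ := by rw [hsum.tsum_eq]; ring

lemma sq_weight_half_mul (t x r : ℝ) : (weight (t / 2) x * r) ^ 2 = weight t x * r ^ 2 := by
  rw [mul_pow, sq (weight _ x), weight_half_mul_self]

lemma mul_norm_le_hsNorm {t r : ℝ} {c : FC} (hc : memHs t c) {n : ℤ} (hr0 : 0 ≤ r)
    (hr : r ^ 2 ≤ wt t n) : r * ‖c n‖ ≤ hsNorm t c := by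
  refine (pow_le_pow_iff_left₀ (by positivity) (Real.sqrt_nonneg _) two_ne_zero).mp ?_
  calc (r * ‖c n‖) ^ 2 = r ^ 2 * ‖c n‖ ^ 2 := mul_pow _ _ _
    _ ≤ wt t n * ‖c n‖ ^ 2 := mul_le_mul_of_nonneg_right hr (sq_nonneg _)
    _ ≤ hsNorm t c ^ 2 := wt_mul_norm_sq_le_hsNorm_sq hc n

lemma norm_D1 (c : FC) (n : ℤ) : ‖D1 c n‖ = |(n : ℝ)| * ‖c n‖ := by
  rw [D1, norm_mul, norm_mul, norm_I, one_mul, norm_intCast]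

lemma lie_apply {ξ g : FC} {k : ℤ} (h₁ : Summable fun j => ξ j * D1 g (k - j))
    (h₂ : Summable fun j => D1 ξ j * g (k - j)) :
    lie ξ g k = ∑' m, I * k * (ξ (k - m) * g m) := by
  have hsum : lie ξ g k = ∑' j, (ξ j * D1 g (k - j) + D1 ξ j * g (k - j)) :=
    (h₁.tsum_add h₂).symm
  rw [hsum, ← (Equiv.subLeft k).tsum_eq]
  refine tsum_congr fun m => ?_
  simp only [Equiv.subLeft_apply, sub_sub_cancel, D1]
  push_cast
  ring

/-- The summand of `(𝓛_ξ g, g)_{H^σ}`; `p = (k, m)` pairs the output frequency `k` with the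
frequency `m` of the input `g`. -/
def lieKernel (σ : ℝ) (ξ g : FC) (p : ℤ × ℤ) : ℂ :=
  (wt σ p.1 : ℂ) * (I * p.1 * (ξ (p.1 - p.2) * g p.2) * (starRingEnd ℂ) (g p.1))

lemma weight_mul_abs_le {σ : ℝ} (hσ : 0 ≤ σ) (k m : ℝ) :
    weight σ k * |k| ≤
      2 ^ ((σ + 1) / 2) * weight (σ + 1 / 2) (k - m) *
        (weight ((σ + 1) / 2) m * weight (σ / 2) k) := by
  have hσ' : 0 ≤ (σ + 1) / 2 := by positivity
  have hsplit : weight σ k * weight (1 / 2) k = weight ((σ + 1) / 2) k * weight (σ / 2) k := by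
    rw [← weight_half_mul_self σ k, mul_right_comm, ← weight_add, add_div]
  calc weight σ k * |k| ≤ weight σ k * weight (1 / 2) k :=
        mul_le_mul_of_nonneg_left (abs_le_weight_half k) (weight_nonneg _ _)
    _ = weight ((σ + 1) / 2) ((k - m) + m) * weight (σ / 2) k := by rw [hsplit, sub_add_cancel]
    _ ≤ (2 ^ ((σ + 1) / 2) * weight ((σ + 1) / 2) (k - m) * weight ((σ + 1) / 2) m) *
          weight (σ / 2) k :=
        mul_le_mul_of_nonneg_right (weight_add_le hσ' _ _) (weight_nonneg _ _)
    _ ≤ (2 ^ ((σ + 1) / 2) * weight (σ + 1 / 2) (k - m) * weight ((σ + 1) / 2) m) *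
          weight (σ / 2) k := by
        gcongr
        · exact weight_nonneg _ _
        · exact weight_nonneg _ _
        · exact weight_le_weight (by linarith) _
    _ = _ := by ring

lemma norm_lieKernel_le {σ : ℝ} (hσ : 0 ≤ σ) (ξ g : FC) (p : ℤ × ℤ) :
    ‖lieKernel σ ξ g p‖ ≤ 2 ^ ((σ + 1) / 2) * (wt (σ + 1 / 2) (p.1 - p.2) * ‖ξ (p.1 - p.2)‖ *
      (weight ((σ + 1) / 2) p.2 * ‖g p.2‖ * (weight (σ / 2) p.1 * ‖g p.1‖))) := by
  have hnorm : ‖lieKernel σ ξ g p‖ =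
      weight σ p.1 * |(p.1 : ℝ)| * (‖ξ (p.1 - p.2)‖ * (‖g p.2‖ * ‖g p.1‖)) := by
    simp only [lieKernel, norm_mul, norm_real, norm_I, norm_intCast, RCLike.norm_conj,
      Real.norm_of_nonneg (weight_nonneg _ _), wt_eq_weight, one_mul]
    ring
  rw [hnorm, wt_eq_weight, Int.cast_sub]
  calc weight σ p.1 * |(p.1 : ℝ)| * (‖ξ (p.1 - p.2)‖ * (‖g p.2‖ * ‖g p.1‖))
      ≤ 2 ^ ((σ + 1) / 2) * weight (σ + 1 / 2) ((p.1 : ℝ) - p.2) *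
          (weight ((σ + 1) / 2) p.2 * weight (σ / 2) p.1) *
          (‖ξ (p.1 - p.2)‖ * (‖g p.2‖ * ‖g p.1‖)) :=
        mul_le_mul_of_nonneg_right (weight_mul_abs_le hσ _ _) (by positivity)
    _ = _ := by ring

section lieKernel

variable {σ : ℝ} {ξ g : FC}

lemma summable_lieKernel (hσ : 0 ≤ σ) (hξ : Summable fun j => wt (σ + 1 / 2) j * ‖ξ j‖)
    (hg : memHs σ g) (hg₁ : memHs (σ + 1) g) : Summable (lieKernel σ ξ g) := by
  have hx : Summable fun m : ℤ => (weight ((σ + 1) / 2) m * ‖g m‖) ^ 2 :=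
    hg₁.congr fun m => (sq_weight_half_mul _ _ _).symm
  have hy : Summable fun k : ℤ => (weight (σ / 2) k * ‖g k‖) ^ 2 :=
    hg.congr fun k => (sq_weight_half_mul _ _ _).symm
  exact .of_norm_bounded
    ((summable_and_tsum_mul_sub_le (fun j => mul_nonneg (weight_nonneg _ _) (norm_nonneg _))
      hξ hx hy).1.mul_left _) (norm_lieKernel_le hσ ξ g)

lemma hsInner_lie_eq_tsum_lieKernel (hσ : 0 ≤ σ)
    (hξ : Summable fun j => wt (σ + 1 / 2) j * ‖ξ j‖) (hg : memHs σ g) (hg₁ : memHs (σ + 1) g) :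
    hsInner σ (lie ξ g) g = (∑' p, lieKernel σ ξ g p).re := by
  have hξle : ∀ j, ‖ξ j‖ ≤ wt (σ + 1 / 2) j * ‖ξ j‖ := fun j =>
    le_mul_of_one_le_left (norm_nonneg _) (one_le_weight (by positivity) _)
  have hD1ξle : ∀ j, ‖D1 ξ j‖ ≤ wt (σ + 1 / 2) j * ‖ξ j‖ := fun j => by
    rw [norm_D1]
    exact mul_le_mul_of_nonneg_right ((abs_le_weight_half _).trans
      (weight_le_weight (by linarith) _)) (norm_nonneg _)
  have hgle : ∀ n, ‖g n‖ ≤ hsNorm (σ + 1) g := fun n => by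
    simpa using mul_norm_le_hsNorm hg₁ zero_le_one
      ((one_pow 2).trans_le (one_le_weight (by linarith) n))
  have hD1gle : ∀ n, ‖D1 g n‖ ≤ hsNorm (σ + 1) g := fun n => by
    rw [norm_D1]
    refine mul_norm_le_hsNorm hg₁ (abs_nonneg _) ?_
    rw [sq_abs, wt_eq_weight]
    exact (le_add_of_nonneg_left zero_le_one).trans
      ((Real.rpow_one _).symm.trans_le (weight_le_weight (by linarith) _))
  have hslice : ∀ k, lie ξ g k = ∑' m, I * k * (ξ (k - m) * g m) := fun k =>
    lie_apply
      (.of_norm_bounded (hξ.mul_right _) fun j => by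
        rw [norm_mul]
        exact mul_le_mul (hξle j) (hD1gle _) (norm_nonneg _)
          (mul_nonneg (weight_nonneg _ _) (norm_nonneg _)))
      (.of_norm_bounded (hξ.mul_right _) fun j => by
        rw [norm_mul]
        exact mul_le_mul (hD1ξle j) (hgle _) (norm_nonneg _)
          (mul_nonneg (weight_nonneg _ _) (norm_nonneg _)))
  rw [hsInner, (summable_lieKernel hσ hξ hg hg₁).tsum_prod]
  congr 1
  refine tsum_congr fun k => ?_
  rw [hslice, ← tsum_mul_right, ← tsum_mul_left]
  rfl

lemma lieKernel_add_conj_swap (hξ : isReal ξ) (p : ℤ × ℤ) :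
    lieKernel σ ξ g p + (starRingEnd ℂ) (lieKernel σ ξ g p.swap) =
      I * ((weightedId σ p.1 - weightedId σ p.2 : ℝ) : ℂ) *
        (ξ (p.1 - p.2) * g p.2 * (starRingEnd ℂ) (g p.1)) := by
  obtain ⟨k, m⟩ := p
  have hξ' : ξ (m - k) = (starRingEnd ℂ) (ξ (k - m)) := by rw [← hξ, neg_sub]
  simp only [lieKernel, Prod.swap, weightedId, wt_eq_weight, hξ', map_mul, map_intCast,
    conj_ofReal, conj_I, conj_conj]
  push_cast
  ring

lemma norm_lieKernel_add_conj_swap_le (hσ : 0 ≤ σ) (hξ : isReal ξ) (p : ℤ × ℤ) :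
    ‖lieKernel σ ξ g p + (starRingEnd ℂ) (lieKernel σ ξ g p.swap)‖ ≤
      (2 * σ + 1) * 2 ^ σ * (wt (σ + 1 / 2) (p.1 - p.2) * ‖ξ (p.1 - p.2)‖ *
        (weight (σ / 2) p.2 * ‖g p.2‖ * (weight (σ / 2) p.1 * ‖g p.1‖))) := by
  rw [lieKernel_add_conj_swap hξ, norm_mul, norm_mul, norm_I, one_mul, norm_real,
    Real.norm_eq_abs, norm_mul, norm_mul, RCLike.norm_conj, wt_eq_weight, Int.cast_sub]
  calc |weightedId σ p.1 - weightedId σ p.2| * (‖ξ (p.1 - p.2)‖ * ‖g p.2‖ * ‖g p.1‖)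
      ≤ (2 * σ + 1) * 2 ^ σ * weight (σ + 1 / 2) ((p.1 : ℝ) - p.2) *
          (weight (σ / 2) p.2 * weight (σ / 2) p.1) * (‖ξ (p.1 - p.2)‖ * ‖g p.2‖ * ‖g p.1‖) :=
        mul_le_mul_of_nonneg_right (abs_weightedId_sub_le hσ _ _) (by positivity)
    _ = _ := by ring

end lieKernel

theorem abs_hsInner_lie_self_le {σ : ℝ} (hσ : 0 ≤ σ) {ξ g : FC} (hξr : isReal ξ)
    (hξ : Summable fun j => wt (σ + 1 / 2) j * ‖ξ j‖) (hg : memHs σ g) (hg₁ : memHs (σ + 1) g) :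
    |hsInner σ (lie ξ g) g| ≤
      (σ + 1 / 2) * 2 ^ σ * (∑' j, wt (σ + 1 / 2) j * ‖ξ j‖) * hsNorm σ g ^ 2 := by
  set K := lieKernel σ ξ g
  have hK : Summable K := summable_lieKernel hσ hξ hg hg₁
  have hKswap : Summable fun p : ℤ × ℤ => (starRingEnd ℂ) (K p.swap) :=
    Complex.summable_conj.mpr ((Equiv.prodComm ℤ ℤ).summable_iff.mpr hK)
  have hy : Summable fun k : ℤ => (weight (σ / 2) k * ‖g k‖) ^ 2 :=
    hg.congr fun k => (sq_weight_half_mul _ _ _).symm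
  obtain ⟨hbound, hYoung⟩ := summable_and_tsum_mul_sub_le
    (fun j => mul_nonneg (weight_nonneg _ _) (norm_nonneg _)) hξ hy hy
  have hsym :
      2 * hsInner σ (lie ξ g) g = (∑' p : ℤ × ℤ, (K p + (starRingEnd ℂ) (K p.swap))).re := by
    have hswap : ∑' p : ℤ × ℤ, K p.swap = ∑' p, K p := (Equiv.prodComm ℤ ℤ).tsum_eq K
    rw [hK.tsum_add hKswap, ← Complex.conj_tsum, hswap, add_re,
      conj_re, hsInner_lie_eq_tsum_lieKernel hσ hξ hg hg₁]
    ring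
  have hnorm := tsum_of_norm_bounded (hbound.mul_left ((2 * σ + 1) * 2 ^ σ)).hasSum
    (norm_lieKernel_add_conj_swap_le hσ hξr)
  rw [tsum_mul_left] at hnorm
  have h2 : |2 * hsInner σ (lie ξ g) g| ≤
      (2 * σ + 1) * 2 ^ σ * ((∑' j, wt (σ + 1 / 2) j * ‖ξ j‖) * hsNorm σ g ^ 2) := by
    rw [hsym]
    refine (abs_re_le_norm _).trans (hnorm.trans ?_)
    refine mul_le_mul_of_nonneg_left (hYoung.trans_eq ?_) (by positivity)
    simp only [hsNorm_sq, sq_weight_half_mul, wt_eq_weight]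
    ring
  rw [abs_mul, abs_two] at h2
  linarith

theorem exists_abs_hsInner_lie_self_le {σ ρ : ℝ} (hσ : 0 ≤ σ) (hρ : 2 * σ + 2 ≤ ρ) :
    ∃ K ≥ (0 : ℝ), ∀ ξ g : FC, isReal ξ → memHs ρ ξ → memHs σ g → memHs (σ + 1) g →
      |hsInner σ (lie ξ g) g| ≤ K * hsNorm ρ ξ * hsNorm σ g ^ 2 := by
  refine ⟨(σ + 1 / 2) * 2 ^ σ * √(∑' k : ℤ, wt (-1) k), by positivity,
    fun ξ g hξr hξ hg hg₁ => ?_⟩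
  obtain ⟨hs, hle⟩ := summable_and_tsum_wt_mul_norm_le (t := σ + 1 / 2) (by linarith) hξ
  calc |hsInner σ (lie ξ g) g|
      ≤ (σ + 1 / 2) * 2 ^ σ * (∑' j, wt (σ + 1 / 2) j * ‖ξ j‖) * hsNorm σ g ^ 2 :=
        abs_hsInner_lie_self_le hσ hξr hs hg hg₁
    _ ≤ (σ + 1 / 2) * 2 ^ σ * (√(∑' k : ℤ, wt (-1) k) * hsNorm ρ ξ) * hsNorm σ g ^ 2 := by
        gcongr
    _ = _ := by ring

end FC

lemma SchwartzMap.exists_one_add_sq_mul_le (f : SchwartzMap ℝ ℝ) :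
    ∃ C, ∀ x : ℝ, (1 + x ^ 2) * f x ≤ C := by
  obtain ⟨C₀, -, h₀⟩ := f.decay 0 0
  obtain ⟨C₂, -, h₂⟩ := f.decay 2 0
  refine ⟨C₀ + C₂, fun x => ?_⟩
  have h0 := h₀ x
  have h2 := h₂ x
  simp only [pow_zero, one_mul, norm_iteratedFDeriv_zero, Real.norm_eq_abs, sq_abs] at h0 h2
  nlinarith [le_abs_self (f x), sq_nonneg x]

lemma summable_sq_and_tsum_sq_le {ι : Type*} {f N : ι → ℝ} {A : ℝ} (hN0 : ∀ i, 0 ≤ N i)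
    (hN : Summable N) (hf : ∀ i, |f i| ≤ A * N i) :
    Summable (fun i => |f i| ^ 2) ∧ ∑' i, |f i| ^ 2 ≤ A ^ 2 * (∑' i, N i) ^ 2 := by
  have hle : ∀ i, |f i| ^ 2 ≤ A ^ 2 * (∑' i, N i) * N i := fun i => by
    have hNi : N i ≤ ∑' i, N i := hN.le_tsum i fun j _ => hN0 j
    calc |f i| ^ 2 ≤ (A * N i) ^ 2 := pow_le_pow_left₀ (abs_nonneg _) (hf i) 2
      _ = A ^ 2 * N i * N i := by ring
      _ ≤ A ^ 2 * N i * ∑' i, N i := mul_le_mul_of_nonneg_left hNi (by positivity [hN0 i])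
      _ = _ := by ring
  have hs : Summable fun i => |f i| ^ 2 :=
    .of_nonneg_of_le (fun i => sq_nonneg _) hle (hN.mul_left _)
  refine ⟨hs, ?_⟩
  calc ∑' i, |f i| ^ 2 ≤ ∑' i, A ^ 2 * (∑' i, N i) * N i := hs.tsum_le_tsum hle (hN.mul_left _)
    _ = _ := by rw [tsum_mul_left]; ring

lemma pairInner_hMol (jh : ℝ → ℝ) (ε : ℝ) (ξ : ℕ → FC) (k : ℕ) (s : ℝ) (u η : FC) :
    FC.pairInner s (s - 1) (hMol1 jh ε ξ k u) (hMol2 jh ε ξ k η) u η =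
      -(FC.hsInner (s - 2) (FC.lie (ξ k) (FC.helm (FC.Jmol jh ε u))) (FC.helm (FC.Jmol jh ε u)) +
        FC.hsInner (s - 1) (FC.lie (ξ k) (FC.Jmol jh ε η)) (FC.Jmol jh ε η)) := by
  rw [FC.pairInner, hMol1, hMol2, FC.hsInner_neg_left, FC.hsInner_neg_left, FC.Jmol,
    FC.hsInner_mult_left, FC.hsInner_mult_left, FC.hsInner_helmInv_left,
    FC.hsInner_helm_right, show s - 2 + 1 = s - 1 by ring, neg_add]

theorem exists_abs_pairInner_hMol_le {s : ℝ} (hs : 2 ≤ s) {jh : ℝ → ℝ} {C : ℝ}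
    (hj0 : ∀ x, 0 ≤ jh x) (hj1 : ∀ x, jh x ≤ 1) (hC : ∀ x, (1 + x ^ 2) * jh x ≤ C) :
    ∃ K ≥ (0 : ℝ), ∀ ε, 0 < ε → ε ≤ 1 → ∀ (ξ : ℕ → FC) (k : ℕ) (u η : FC),
      FC.isReal (ξ k) → FC.memHs (2 * s) (ξ k) → FC.memHs s u → FC.memHs (s - 1) η →
      |FC.pairInner s (s - 1) (hMol1 jh ε ξ k u) (hMol2 jh ε ξ k η) u η| ≤
        K * FC.hsNorm (2 * s) (ξ k) * (FC.hsNorm s u ^ 2 + FC.hsNorm (s - 1) η ^ 2) := by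
  obtain ⟨K₁, hK₁, hlie₁⟩ := FC.exists_abs_hsInner_lie_self_le (σ := s - 2) (ρ := 2 * s)
    (by linarith) (by linarith)
  obtain ⟨K₂, hK₂, hlie₂⟩ := FC.exists_abs_hsInner_lie_self_le (σ := s - 1) (ρ := 2 * s)
    (by linarith) (by linarith)
  refine ⟨K₁ + K₂, by positivity, fun ε hε hε1 ξ k u η hξr hξ hu hη => ?_⟩
  have hg₁ := FC.memHs_helm (FC.memHs_Jmol (ε := ε) hu hj0 hj1)
  have hg₁' : FC.memHs (s - 2 + 1) (FC.helm (FC.Jmol jh ε u)) := by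
    rw [show s - 2 + 1 = s + 1 - 2 by ring]
    exact FC.memHs_helm (FC.memHs_Jmol_add_one hu hj0 hj1 hC hε hε1)
  have hG₁ : FC.hsNorm (s - 2) (FC.helm (FC.Jmol jh ε u)) ^ 2 ≤ FC.hsNorm s u ^ 2 :=
    (FC.hsNorm_helm_sq_le (FC.memHs_Jmol hu hj0 hj1)).trans (FC.hsNorm_Jmol_sq_le hu hj0 hj1)
  have hG₂ := FC.hsNorm_Jmol_sq_le (ε := ε) hη hj0 hj1
  have hN := FC.hsNorm_nonneg (2 * s) (ξ k)
  rw [pairInner_hMol, abs_neg]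
  calc _ ≤ _ := abs_add_le _ _
    _ ≤ K₁ * FC.hsNorm (2 * s) (ξ k) * FC.hsNorm (s - 2) (FC.helm (FC.Jmol jh ε u)) ^ 2 +
          K₂ * FC.hsNorm (2 * s) (ξ k) * FC.hsNorm (s - 1) (FC.Jmol jh ε η) ^ 2 :=
      add_le_add (hlie₁ _ _ hξr hξ hg₁ hg₁')
        (hlie₂ _ _ hξr hξ (FC.memHs_Jmol hη hj0 hj1)
          (FC.memHs_Jmol_add_one hη hj0 hj1 hC hε hε1))
    _ ≤ K₁ * FC.hsNorm (2 * s) (ξ k) * FC.hsNorm s u ^ 2 +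
          K₂ * FC.hsNorm (2 * s) (ξ k) * FC.hsNorm (s - 1) η ^ 2 := by gcongr
    _ ≤ _ := by
      nlinarith [mul_nonneg (mul_nonneg hK₁ hN) (sq_nonneg (FC.hsNorm (s - 1) η)),
        mul_nonneg (mul_nonneg hK₂ hN) (sq_nonneg (FC.hsNorm s u))]

theorem statement16_general (s : ℝ) (hs : 11 / 2 < s) (ξ : ℕ → FC)
    (hξmem : ∀ σ : ℝ, 0 ≤ σ → ∀ k : ℕ, FC.memHs σ (ξ k))
    (hξreal : ∀ k : ℕ, FC.isReal (ξ k))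
    (hξsum : ∀ σ : ℝ, 0 ≤ σ → Summable fun k : ℕ => FC.hsNorm σ (ξ k))
    (jhat : SchwartzMap ℝ ℝ)
    (hj0 : ∀ x : ℝ, 0 ≤ jhat x) (hj1 : ∀ x : ℝ, jhat x ≤ 1) :
    ∃ C > (0 : ℝ), ∀ ε : ℝ, ε ∈ Set.Ioo (0 : ℝ) 1 → ∀ u η : FC,
      FC.memHs s u → FC.memHs (s - 1) η → FC.isReal u → FC.isReal η →
      Summable (fun k : ℕ =>
        |FC.pairInner s (s - 1) (hMol1 (⇑jhat) ε ξ k u) (hMol2 (⇑jhat) ε ξ k η) u η| ^ 2) ∧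
      ∑' k : ℕ,
          |FC.pairInner s (s - 1) (hMol1 (⇑jhat) ε ξ k u) (hMol2 (⇑jhat) ε ξ k η) u η| ^ 2
        ≤ C * (FC.hsNorm s u ^ 2 + FC.hsNorm (s - 1) η ^ 2) ^ 2 := by
  obtain ⟨Cj, hCj⟩ := jhat.exists_one_add_sq_mul_le
  obtain ⟨K, hK, hbound⟩ := exists_abs_pairInner_hMol_le (s := s) (by linarith) hj0 hj1 hCj
  set S := ∑' k, FC.hsNorm (2 * s) (ξ k)
  refine ⟨K ^ 2 * S ^ 2 + 1, by positivity, fun ε ⟨hε0, hε1⟩ u η hu hη _ _ => ?_⟩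
  set X := FC.hsNorm s u ^ 2 + FC.hsNorm (s - 1) η ^ 2
  obtain ⟨hsum, hle⟩ := summable_sq_and_tsum_sq_le (A := K * X)
    (fun k => FC.hsNorm_nonneg _ _) (hξsum (2 * s) (by linarith)) fun k =>
      (hbound ε hε0 hε1.le ξ k u η (hξreal k) (hξmem _ (by linarith) k) hu hη).trans_eq (by ring)
  refine ⟨hsum, hle.trans ?_⟩
  nlinarith [sq_nonneg X]

/-- Let `s > 11/2`, `Σ_k ‖ξ_k‖_{H^σ} < ∞` for all `σ ≥ 0`, and let `j` be a
fixed Schwartz mollifier (`ĵ` Schwartz, `0 ≤ ĵ ≤ 1`, `ĵ = 1` on `[-1,1]`).  Then there is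
`C > 0`, independent of `ε`, such that for all `ε ∈ (0,1)` and `X = (u,η) ∈ H^s × H^{s-1}`:
`Σ_k |(h_ε^k(X), X)_{H^s×H^{s-1}}|² ≤ C (‖u‖²_{H^s} + ‖η‖²_{H^{s-1}})²`. -/
theorem statement16 (s : ℝ) (hs : 11 / 2 < s) (ξ : ℕ → FC)
    (hξmem : ∀ σ : ℝ, 0 ≤ σ → ∀ k : ℕ, FC.memHs σ (ξ k))
    (hξreal : ∀ k : ℕ, FC.isReal (ξ k))
    (hξsum : ∀ σ : ℝ, 0 ≤ σ → Summable fun k : ℕ => FC.hsNorm σ (ξ k))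
    (jhat : SchwartzMap ℝ ℝ)
    (hj0 : ∀ x : ℝ, 0 ≤ jhat x) (hj1 : ∀ x : ℝ, jhat x ≤ 1)
    (hjone : ∀ x : ℝ, |x| ≤ 1 → jhat x = 1) :
    ∃ C > (0 : ℝ), ∀ ε : ℝ, ε ∈ Set.Ioo (0 : ℝ) 1 → ∀ u η : FC,
      FC.memHs s u → FC.memHs (s - 1) η → FC.isReal u → FC.isReal η →
      Summable (fun k : ℕ =>
        |FC.pairInner s (s - 1) (hMol1 (⇑jhat) ε ξ k u) (hMol2 (⇑jhat) ε ξ k η) u η| ^ 2) ∧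
      ∑' k : ℕ,
          |FC.pairInner s (s - 1) (hMol1 (⇑jhat) ε ξ k u) (hMol2 (⇑jhat) ε ξ k η) u η| ^ 2
        ≤ C * (FC.hsNorm s u ^ 2 + FC.hsNorm (s - 1) η ^ 2) ^ 2 :=
  statement16_general s hs ξ hξmem hξreal hξsum jhat hj0 hj1
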